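/- Let E be a real inner product space, let f : E → ℝ be convex and differentiable with ‖∇f(x)‖ ≤ ε for all x ∈ E, where ε > 0. Fix a step size η > 0 and define iterates θ_{t+1} = θ_t − η · ∇f(θ_t) starting from θ₁ ∈ E. Then for every θ* ∈ E and every positive natural number T, min_{1 ≤ t ≤ T} f(θ_t) − f(θ*) ≤ (‖θ₁ − θ*‖² / (T·η) + η·ε²) / 2; equivalently, the excess over the constant η·ε²/2 satisfies min_{1 ≤ t ≤ T} f(θ_t) − f(θ*) − η·ε²/2 ≤ ‖θ₁ − θ*‖² / (2·T·η), so it decays at rate O(1/T). -/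

import Mathlib

open RealInnerProductSpace

lemma grad_convex_ineq {E : Type*} [NormedAddCommGroup E] [InnerProductSpace ℝ E]
    {f : E → ℝ} {f' : E → E}
    (hconv : ConvexOn ℝ Set.univ f)
    (hgrad : ∀ x : E, HasFDerivAt f (innerSL ℝ (f' x)) x)
    (x y : E) : ⟪f' x, y - x⟫ ≤ f y - f x := by
  set g : ℝ → ℝ := fun s => f (x + s • (y - x)) with hg
  have hgconv : ConvexOn ℝ Set.univ g := by
    have h := hconv.comp_affineMap (AffineMap.lineMap x y)
    have heq : f ∘ (AffineMap.lineMap x y : ℝ →ᵃ[ℝ] E) = g := by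
      funext s
      simp [g, Function.comp, AffineMap.lineMap_apply, add_comm]
    simpa [heq] using h
  have h1 : HasDerivAt (fun s : ℝ => x + s • (y - x)) (y - x) 0 := by
    simpa using ((hasDerivAt_id (0:ℝ)).smul_const (y - x)).const_add x
  have hd : HasDerivAt g ⟪f' x, y - x⟫ 0 := by
    have hx0 : x = x + (0:ℝ) • (y - x) := by simp
    have h2 := (hx0 ▸ hgrad x).comp_hasDerivAt 0 h1
    simp at h2
    exact h2
  have := hgconv.le_slope_of_hasDerivAt (Set.mem_univ 0) (Set.mem_univ 1) zero_lt_one hd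
  simpa [slope_def_field, g] using this

/-- Fixed-step-size gradient descent on a convex function with `ε`-bounded gradients:
the best iterate satisfies
`min_{1≤t≤T} f(θ_t) − f(θ*) ≤ (‖θ₁ − θ*‖²/(Tη) + ηε²)/2`, so the excess over the
constant `ηε²/2` decays like `‖θ₁ − θ*‖²/(2Tη) = O(1/T)`.
Here `f' x` is the gradient of `f` at `x`, i.e. `f` is differentiable at `x`
with derivative `h ↦ ⟪f' x, h⟫`. -/
theorem stmt14 {E : Type*} [NormedAddCommGroup E] [InnerProductSpace ℝ E]
    (f : E → ℝ) (f' : E → E) (ε : ℝ) (hε : 0 < ε)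
    (hconv : ConvexOn ℝ Set.univ f)
    (hgrad : ∀ x : E, HasFDerivAt f (innerSL ℝ (f' x)) x)
    (hbound : ∀ x : E, ‖f' x‖ ≤ ε)
    (η : ℝ) (hη : 0 < η)
    (θ : ℕ → E) (hiter : ∀ t, 1 ≤ t → θ (t + 1) = θ t - η • f' (θ t))
    (θstar : E) (T : ℕ) (hT : 0 < T) :
    (((Finset.Icc 1 T).inf' (Finset.nonempty_Icc.mpr hT) fun t => f (θ t)) - f θstar
        ≤ (‖θ 1 - θstar‖ ^ 2 / (T * η) + η * ε ^ 2) / 2) ∧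
    (((Finset.Icc 1 T).inf' (Finset.nonempty_Icc.mpr hT) fun t => f (θ t)) - f θstar
        - η * ε ^ 2 / 2 ≤ ‖θ 1 - θstar‖ ^ 2 / (2 * T * η)) := by
  set m : ℝ := (Finset.Icc 1 T).inf' (Finset.nonempty_Icc.mpr hT) fun t => f (θ t) with hm
  -- per-step inequality
  have hstep : ∀ t : ℕ, 1 ≤ t →
      2 * η * (f (θ t) - f θstar)
        ≤ ‖θ t - θstar‖ ^ 2 - ‖θ (t + 1) - θstar‖ ^ 2 + η ^ 2 * ε ^ 2 := by
    intro t ht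
    have hit := hiter t ht
    have hkey : ⟪f' (θ t), θstar - θ t⟫ ≤ f θstar - f (θ t) :=
      grad_convex_ineq hconv hgrad (θ t) θstar
    have hrw : θ (t + 1) - θstar = (θ t - θstar) - η • f' (θ t) := by
      rw [hit]; abel
    have hnorm : ‖θ (t + 1) - θstar‖ ^ 2
        = ‖θ t - θstar‖ ^ 2 - 2 * (η * ⟪θ t - θstar, f' (θ t)⟫) + η ^ 2 * ‖f' (θ t)‖ ^ 2 := by
      rw [hrw, norm_sub_sq_real, real_inner_smul_right, norm_smul]
      rw [Real.norm_eq_abs, abs_of_pos hη]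
      ring
    have hsymm : ⟪θ t - θstar, f' (θ t)⟫ = - ⟪f' (θ t), θstar - θ t⟫ := by
      rw [real_inner_comm, ← inner_neg_right]; congr 1; abel
    have hv2 : ‖f' (θ t)‖ ^ 2 ≤ ε ^ 2 :=
      pow_le_pow_left₀ (norm_nonneg _) (hbound (θ t)) 2
    nlinarith [sq_nonneg η, mul_nonneg (sq_nonneg η) (sub_nonneg.mpr hv2),
      mul_le_mul_of_nonneg_left hkey (by positivity : (0:ℝ) ≤ 2 * η)]
  -- telescoping sum
  have hsum : ∀ n : ℕ,
      2 * η * (∑ t ∈ Finset.Icc 1 n, (f (θ t) - f θstar))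
        ≤ ‖θ 1 - θstar‖ ^ 2 - ‖θ (n + 1) - θstar‖ ^ 2 + n * η ^ 2 * ε ^ 2 := by
    intro n
    induction n with
    | zero => simp
    | succ n ih =>
      rw [Finset.sum_Icc_succ_top (by omega : 1 ≤ n + 1)]
      have h := hstep (n + 1) (by omega)
      push_cast
      push_cast at ih
      nlinarith [ih, h]
  -- min bound
  have hmin : (T : ℝ) * (m - f θstar) ≤ ∑ t ∈ Finset.Icc 1 T, (f (θ t) - f θstar) := by
    have h1 : ∀ t ∈ Finset.Icc 1 T, m - f θstar ≤ f (θ t) - f θstar := fun t ht =>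
      sub_le_sub_right (Finset.inf'_le _ ht) _
    calc (T : ℝ) * (m - f θstar) = ∑ _t ∈ Finset.Icc 1 T, (m - f θstar) := by
          rw [Finset.sum_const, Nat.card_Icc, nsmul_eq_mul]
          norm_num
      _ ≤ _ := Finset.sum_le_sum h1
  have hTpos : (0:ℝ) < (T : ℝ) := by exact_mod_cast hT
  have key : 2 * η * ((T : ℝ) * (m - f θstar)) ≤ ‖θ 1 - θstar‖ ^ 2 + T * η ^ 2 * ε ^ 2 := by
    have h2 := hsum T
    have h3 := mul_le_mul_of_nonneg_left hmin (by positivity : (0:ℝ) ≤ 2 * η)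
    nlinarith [sq_nonneg ‖θ (T + 1) - θstar‖]
  constructor
  · rw [le_div_iff₀ (by norm_num : (0:ℝ) < 2), ← sub_le_iff_le_add,
      le_div_iff₀ (by positivity : (0:ℝ) < (T : ℝ) * η)]
    nlinarith [key]
  · rw [le_div_iff₀ (by positivity : (0:ℝ) < 2 * (T : ℝ) * η)]
    nlinarith [key]
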